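/- Setup: fix finite sets B₁, C, H; for each b ∈ B₁ ∪ {∞} a nonempty finite set A_b with positive integers m_{b,a} (a ∈ A_b); for each c ∈ C a finite (possibly empty) set A'_c with positive integers m'_{c,a'} and a nonempty finite set A''_c with positive integers m''_{c,a''}. Let L be the free ℤ-module on I = (⊔_{b∈B₁∪{∞}} A_b) ⊔ (⊔_{c∈C} A'_c) ⊔ H, let L' be the free ℤ-module on I ⊔ (⊔_{c∈C} A''_c), and let j : L' → L be the projection forgetting the A''-coordinates. Define ℤ-linear maps f_* : L → ℤ^{B₁}, (f_*α)_b = ∑_{a∈A_b} m_{b,a}α_{b,a} − ∑_{a∈A_∞} m_{∞,a}α_{∞,a}, and f'_* : L' → ℤ^{B₁} ⊕ ℤ^{C}, whose B₁-components are given by the same formula and whose c-component is ∑_{a'∈A'_c} m'_{c,a'}β_{c,a'} + ∑_{a''∈A''_c} m''_{c,a''}β_{c,a''} − ∑_{a∈A_∞} m_{∞,a}β_{∞,a}. For c ∈ C set m''(c) = gcd_{a''∈A''_c} m''_{c,a''}, set G = ⊕_{c∈C} ℤ/m''(c)ℤ, and let θ : ker f_* → G send α to the element whose c-coordinate is the class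 of ∑_{a∈A_∞} m_{∞,a}α_{∞,a} − ∑_{a'∈A'_c} m'_{c,a'}α_{c,a'} modulo m''(c). Then: (1) j(ker f'_*) ⊆ ker f_*; (2) the kernel of θ is exactly j(ker f'_*); consequently θ induces a group isomorphism (ker f_*)/j(ker f'_*) ≅ θ(ker f_*) ⊆ G. -/

import Mathlib

open Finset

section PencilModel

variable (B₁ C H : Type) [Fintype B₁] [Fintype C] [Fintype H]
  (A : Option B₁ → Type) [∀ b, Fintype (A b)]
  (A' : C → Type) [∀ c, Fintype (A' c)]
  (A'' : C → Type) [∀ c, Fintype (A'' c)]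
  (m : ∀ b, A b → ℕ) (m' : ∀ c, A' c → ℕ) (m'' : ∀ c, A'' c → ℕ)

/-- The index set of the basis of elementary loops of `L = H₁(M)`: loops around the
curves `C_{b,a}` (`b ∈ B₁ ∪ {∞}`, `a ∈ A_b`), the curves `C'_{c,a'}` (`c ∈ C`,
`a' ∈ A'_c`) and the horizontal components (indexed by `H`). -/
abbrev Idx := (Σ b : Option B₁, A b) ⊕ ((Σ c : C, A' c) ⊕ H)

/-- The index set of the basis of elementary loops of `L' = H₁(M')`: that of `L`
together with loops around the extra deleted curves `C''_{c,a''}`. -/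
abbrev Idx' := (Idx B₁ C H A A') ⊕ (Σ c : C, A'' c)

/-- The projection `j : L' → L` forgetting the `A''`-coordinates. -/
def jmap : ((Idx' B₁ C H A A' A'') → ℤ) →+ ((Idx B₁ C H A A') → ℤ) :=
  AddMonoidHom.mk' (fun β i => β (Sum.inl i)) (fun _ _ => rfl)

/-- The map `f_* : L → ℤ^{B₁}`,
`(f_* α)_b = ∑_{a ∈ A_b} m_{b,a} α_{b,a} − ∑_{a ∈ A_∞} m_{∞,a} α_{∞,a}`. -/
def fstar : ((Idx B₁ C H A A') → ℤ) →+ (B₁ → ℤ) :=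
  AddMonoidHom.mk'
    (fun α b =>
      (∑ a : A (some b), (m (some b) a : ℤ) * α (Sum.inl ⟨some b, a⟩)) -
      (∑ a : A none, (m none a : ℤ) * α (Sum.inl ⟨none, a⟩)))
    (by
      intro x y
      funext b
      simp only [Pi.add_apply, mul_add, Finset.sum_add_distrib]
      ring)

/-- The map `f'_* : L' → ℤ^{B₁} ⊕ ℤ^{C}`, with the same `B₁`-components as `f_*` and with
`c`-component `∑_{a'} m'_{c,a'} β_{c,a'} + ∑_{a''} m''_{c,a''} β_{c,a''}
− ∑_{a ∈ A_∞} m_{∞,a} β_{∞,a}`. -/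
def fstar' : ((Idx' B₁ C H A A' A'') → ℤ) →+ ((B₁ → ℤ) × (C → ℤ)) :=
  AddMonoidHom.mk'
    (fun β =>
      (fun b =>
        (∑ a : A (some b), (m (some b) a : ℤ) * β (Sum.inl (Sum.inl ⟨some b, a⟩))) -
        (∑ a : A none, (m none a : ℤ) * β (Sum.inl (Sum.inl ⟨none, a⟩))),
       fun c =>
        (∑ a' : A' c, (m' c a' : ℤ) * β (Sum.inl (Sum.inr (Sum.inl ⟨c, a'⟩)))) +
        (∑ a'' : A'' c, (m'' c a'' : ℤ) * β (Sum.inr ⟨c, a''⟩)) -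
        (∑ a : A none, (m none a : ℤ) * β (Sum.inl (Sum.inl ⟨none, a⟩)))))
    (by
      intro x y
      refine Prod.ext (funext fun b => ?_) (funext fun c => ?_) <;>
      · simp only [Prod.fst_add, Prod.snd_add, Pi.add_apply, mul_add, Finset.sum_add_distrib]
        ring)

/-- `m''(c)`, the gcd of the multiplicities `m''_{c,a''}` over `a'' ∈ A''_c`. -/
def gcd2 (c : C) : ℕ := Finset.univ.gcd (m'' c)

/-- The map `θ : ker f_* → G = ⊕_{c ∈ C} ℤ/m''(c)ℤ` sending `α` to the element whose
`c`-coordinate is the class of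
`∑_{a ∈ A_∞} m_{∞,a} α_{∞,a} − ∑_{a' ∈ A'_c} m'_{c,a'} α_{c,a'}` modulo `m''(c)`. -/
def theta : (fstar B₁ C H A A' m).ker →+ (∀ c : C, ZMod (gcd2 C A'' m'' c)) :=
  AddMonoidHom.mk'
    (fun α c =>
      ((((∑ a : A none, (m none a : ℤ) * (α : (Idx B₁ C H A A') → ℤ) (Sum.inl ⟨none, a⟩)) -
         (∑ a' : A' c, (m' c a' : ℤ) * (α : (Idx B₁ C H A A') → ℤ) (Sum.inr (Sum.inl ⟨c, a'⟩)))) : ℤ) :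
        ZMod (gcd2 C A'' m'' c)))
    (by
      intro x y
      funext c
      simp only [AddSubgroup.coe_add, Pi.add_apply, mul_add, Finset.sum_add_distrib]
      push_cast
      ring)

end PencilModel

/-!
By Bézout, the linear form `β ↦ ∑_{a''} m''_{c,a''} β_{a''}` on `ℤ^{A''_c}` has image
`m''(c) ℤ`. Since `j` only forgets the `A''`-coordinates and `f'_*` agrees with `f_*` on the
`B₁`-components, an `α ∈ ker f_*` lifts to `ker f'_*` exactly when, for every `c`, those
coordinates can be chosen to cancel `∑_{A_∞} m α − ∑_{A'_c} m' α`, i.e. when `m''(c)` divides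
it, which is `θ α = 0`. The isomorphism is then the first isomorphism theorem for `θ`.
-/

theorem Finset.gcd_dvd_iff_exists_sum_mul_eq {ι R : Type*} [CommRing R] [IsBezout R]
    [NormalizedGCDMonoid R] (s : Finset ι) (f : ι → R) (n : R) :
    s.gcd f ∣ n ↔ ∃ x : ι → R, ∑ i ∈ s, f i * x i = n := by
  constructor
  · rintro ⟨k, rfl⟩
    obtain ⟨g, hg⟩ := Finset.gcd_eq_sum_mul s f
    exact ⟨fun i => g i * k, by simp only [hg, Finset.sum_mul, mul_assoc]⟩
  · rintro ⟨x, rfl⟩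
    exact Finset.dvd_sum fun i hi => (Finset.gcd_dvd hi).mul_right _

theorem Finset.natCast_gcd {ι : Type*} (s : Finset ι) (f : ι → ℕ) :
    ((s.gcd f : ℕ) : ℤ) = s.gcd fun i => (f i : ℤ) := by
  classical
  induction s using Finset.induction_on with
  | empty => simp
  | insert a s _ ih =>
    rw [Finset.gcd_insert, Finset.gcd_insert, ← ih, ← Int.coe_gcd, Int.gcd_natCast_natCast]
    rfl

section PencilModel

variable {B₁ C H : Type}
  {A : Option B₁ → Type} [∀ b, Fintype (A b)]
  {A' : C → Type} [∀ c, Fintype (A' c)]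
  {A'' : C → Type} [∀ c, Fintype (A'' c)]
  (m : ∀ b, A b → ℕ) (m' : ∀ c, A' c → ℕ) {m'' : ∀ c, A'' c → ℕ}

def thetaCoord (α : Idx B₁ C H A A' → ℤ) (c : C) : ℤ :=
  (∑ a : A none, (m none a : ℤ) * α (Sum.inl ⟨none, a⟩)) -
    ∑ a' : A' c, (m' c a' : ℤ) * α (Sum.inr (Sum.inl ⟨c, a'⟩))

theorem theta_apply (α : (fstar B₁ C H A A' m).ker) (c : C) :
    theta B₁ C H A A' A'' m m' m'' α c = (thetaCoord m m' (α : Idx B₁ C H A A' → ℤ) c : ℤ) :=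
  rfl

theorem fstar_jmap (β : Idx' B₁ C H A A' A'' → ℤ) :
    fstar B₁ C H A A' m (jmap B₁ C H A A' A'' β) = (fstar' B₁ C H A A' A'' m m' m'' β).1 :=
  rfl

theorem fstar'_snd_apply (β : Idx' B₁ C H A A' A'' → ℤ) (c : C) :
    (fstar' B₁ C H A A' A'' m m' m'' β).2 c =
      (∑ a'' : A'' c, (m'' c a'' : ℤ) * β (Sum.inr ⟨c, a''⟩)) -
        thetaCoord m m' (jmap B₁ C H A A' A'' β) c := by
  simp only [fstar', jmap, thetaCoord, AddMonoidHom.mk'_apply]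
  ring

theorem map_jmap_ker_fstar'_le_ker_fstar :
    (fstar' B₁ C H A A' A'' m m' m'').ker.map (jmap B₁ C H A A' A'') ≤
      (fstar B₁ C H A A' m).ker := by
  rintro _ ⟨β, hβ, rfl⟩
  exact (fstar_jmap m m' β).trans (congrArg Prod.fst hβ)

theorem mem_map_jmap_ker_fstar'_iff {α : Idx B₁ C H A A' → ℤ}
    (hα : α ∈ (fstar B₁ C H A A' m).ker) :
    α ∈ (fstar' B₁ C H A A' A'' m m' m'').ker.map (jmap B₁ C H A A' A'') ↔
      ∀ c, (gcd2 C A'' m'' c : ℤ) ∣ thetaCoord m m' α c := by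
  simp only [gcd2, Finset.natCast_gcd, Finset.gcd_dvd_iff_exists_sum_mul_eq]
  constructor
  · rintro ⟨β, hβ, rfl⟩ c
    refine ⟨fun a'' => β (Sum.inr ⟨c, a''⟩), ?_⟩
    rw [← sub_eq_zero, ← fstar'_snd_apply]
    exact congrFun (congrArg Prod.snd hβ) c
  · intro hdvd
    choose x hx using hdvd
    refine ⟨Sum.elim α fun p => x p.1 p.2, ?_, rfl⟩
    refine Prod.ext hα (funext fun c => ?_)
    rw [fstar'_snd_apply]
    exact sub_eq_zero.mpr (hx c)

theorem ker_theta :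
    (theta B₁ C H A A' A'' m m' m'').ker =
      ((fstar' B₁ C H A A' A'' m m' m'').ker.map
        (jmap B₁ C H A A' A'')).addSubgroupOf (fstar B₁ C H A A' m).ker := by
  ext α
  rw [AddMonoidHom.mem_ker, AddSubgroup.mem_addSubgroupOf, mem_map_jmap_ker_fstar'_iff m m' α.2,
    funext_iff]
  simp only [theta_apply, Pi.zero_apply, ZMod.intCast_zmod_eq_zero_iff_dvd]

end PencilModel

theorem stmt_11_general (B₁ C H : Type)
    (A : Option B₁ → Type) [∀ b, Fintype (A b)]
    (A' : C → Type) [∀ c, Fintype (A' c)]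
    (A'' : C → Type) [∀ c, Fintype (A'' c)]
    (m : ∀ b, A b → ℕ)
    (m' : ∀ c, A' c → ℕ)
    (m'' : ∀ c, A'' c → ℕ) :
    ((fstar' B₁ C H A A' A'' m m' m'').ker.map (jmap B₁ C H A A' A'') ≤
      (fstar B₁ C H A A' m).ker) ∧
    ((theta B₁ C H A A' A'' m m' m'').ker =
      ((fstar' B₁ C H A A' A'' m m' m'').ker.map
        (jmap B₁ C H A A' A'')).addSubgroupOf (fstar B₁ C H A A' m).ker) ∧
    Nonempty
      (((fstar B₁ C H A A' m).ker ⧸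
          ((fstar' B₁ C H A A' A'' m m' m'').ker.map
            (jmap B₁ C H A A' A'')).addSubgroupOf (fstar B₁ C H A A' m).ker) ≃+
        (theta B₁ C H A A' A'' m m' m'').range) :=
  ⟨map_jmap_ker_fstar'_le_ker_fstar m m', ker_theta m m',
    ⟨(QuotientAddGroup.quotientAddEquivOfEq (ker_theta m m').symm).trans
      (QuotientAddGroup.quotientKerEquivRange _)⟩⟩

/-- Theorem 6.1 of the paper, explicit model: `j(ker f'_*) ⊆ ker f_*`,
the kernel of `θ` is exactly `j(ker f'_*)`, and consequently `θ` induces an isomorphism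
`(ker f_*)/j(ker f'_*) ≅ θ(ker f_*) ⊆ G = ⊕_{c ∈ C} ℤ/m''(c)ℤ`. -/
theorem stmt_11 (B₁ C H : Type) [Fintype B₁] [Fintype C] [Fintype H]
    (A : Option B₁ → Type) [∀ b, Fintype (A b)] [∀ b, Nonempty (A b)]
    (A' : C → Type) [∀ c, Fintype (A' c)]
    (A'' : C → Type) [∀ c, Fintype (A'' c)] [∀ c, Nonempty (A'' c)]
    (m : ∀ b, A b → ℕ) (hm : ∀ b a, 0 < m b a)
    (m' : ∀ c, A' c → ℕ) (hm' : ∀ c a', 0 < m' c a')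
    (m'' : ∀ c, A'' c → ℕ) (hm'' : ∀ c a'', 0 < m'' c a'') :
    ((fstar' B₁ C H A A' A'' m m' m'').ker.map (jmap B₁ C H A A' A'') ≤
      (fstar B₁ C H A A' m).ker) ∧
    ((theta B₁ C H A A' A'' m m' m'').ker =
      ((fstar' B₁ C H A A' A'' m m' m'').ker.map
        (jmap B₁ C H A A' A'')).addSubgroupOf (fstar B₁ C H A A' m).ker) ∧
    Nonempty
      (((fstar B₁ C H A A' m).ker ⧸
          ((fstar' B₁ C H A A' A'' m m' m'').ker.map
            (jmap B₁ C H A A' A'')).addSubgroupOf (fstar B₁ C H A A' m).ker) ≃+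
        (theta B₁ C H A A' A'' m m' m'').range) :=
  stmt_11_general B₁ C H A A' A'' m m' m''
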